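/- Every locally compact topological group is proximally fine with respect to its right uniformity. -/

import Mathlib

open Pointwise

universe u v

/-- Right uniform continuity of `f : G → Y`: a basis of the right uniformity of a topological
group `G` is given by the sets `{(g, h) : g * h⁻¹ ∈ U}`, `U` a neighborhood of the identity. -/
def RightUC {G : Type*} [Group G] (t : TopologicalSpace G) {Y : Type*} [UniformSpace Y]
    (f : G → Y) : Prop :=
  ∀ V ∈ uniformity Y, ∃ U ∈ @nhds G t 1, ∀ g h : G, g * h⁻¹ ∈ U → (f g, f h) ∈ V

/-- Left uniform continuity of `f : G → Y`: a basis of the left uniformity of a topological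
group `G` is given by the sets `{(g, h) : g⁻¹ * h ∈ U}`, `U` a neighborhood of the identity. -/
def LeftUC {G : Type*} [Group G] (t : TopologicalSpace G) {Y : Type*} [UniformSpace Y]
    (f : G → Y) : Prop :=
  ∀ V ∈ uniformity Y, ∃ U ∈ @nhds G t 1, ∀ g h : G, g⁻¹ * h ∈ U → (f g, f h) ∈ V

/-- `f : G → Y` is proximally continuous for the right uniformity of `G`: for every bounded
uniformly continuous `φ : Y → ℝ`, the composition `φ ∘ f` is right uniformly continuous. -/
def RightProxCont {G : Type*} [Group G] (t : TopologicalSpace G) {Y : Type*} [UniformSpace Y]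
    (f : G → Y) : Prop :=
  ∀ φ : Y → ℝ, UniformContinuous φ → (∃ C, ∀ y, |φ y| ≤ C) → RightUC t (φ ∘ f)

/-- A topological group is proximally fine with respect to its right uniformity if every
proximally continuous map into any uniform space is uniformly continuous. -/
def ProxFineGroup {G : Type*} [Group G] (t : TopologicalSpace G) : Prop :=
  ∀ (Y : Type v) [UniformSpace Y] (f : G → Y), RightProxCont t f → RightUC t f

/-- A subset `A` of a topological space `X` is relatively o-radial in `X` if for every family
`(O i)` of open sets and every `a ∈ A` with `a ∈ closure (⋃ i, O i ∩ A)` and `a ∉ closure (O i)`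
for all `i`, there is `J ⊆ I` of regular cardinality such that `a ∈ closure (⋃ j ∈ L, O j)`
for every `L ⊆ J` of the same cardinality as `J`. -/
def RelORadial {X : Type u} [TopologicalSpace X] (A : Set X) : Prop :=
  ∀ {ι : Type u} (O : ι → Set X) (a : X), a ∈ A → (∀ i, IsOpen (O i)) →
    a ∈ closure (⋃ i, O i ∩ A) → (∀ i, a ∉ closure (O i)) →
    ∃ J : Set ι, (Cardinal.mk J).IsRegular ∧
      ∀ L : Set ι, L ⊆ J → Cardinal.mk L = Cardinal.mk J → a ∈ closure (⋃ j ∈ L, O j)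

/-!
An entourage `V` of `Y` is detected by a uniformly continuous map `F` from `Y` to a bounded
pseudometric space `Z`, so it suffices to show that `f : G → Z` is right uniformly continuous as
soon as `φ ∘ f` is for every `1`-Lipschitz `φ : Z → ℝ`.

Suppose `f` is not. Then there are pairs with `dist (f bₙ) (f aₙ) ≥ ε` and `bₙ aₙ⁻¹` in a compact
neighbourhood `K` of `1`, each pair chosen inside a neighbourhood of `1` on which the functions
`dist (f ·) (f aⱼ)` and `dist (f ·) (f bⱼ)` of all earlier pairs oscillate by less than `δ`.
Sorting the `f aₙ` and the `f bₙ` into clustered or separated subsequences yields an infinite `M`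
on which every `f bₘ` is far from every `f aⱼ`. A cluster point `s ∈ K` of `bₘ aₘ⁻¹` moves each
`f aₘ` by at most `δ`, so the `1`-Lipschitz function `infDist · {f aⱼ | j ∈ M}` is small at
`f (s aₘ)` and large at `f bₘ`, although `bₘ` and `s aₘ` are arbitrarily close in the right
uniformity.
-/

open Filter Function Metric Set SetRel Topology Uniformity

section RightUC

variable {G : Type*} [Group G] [TopologicalSpace G]

theorem rightUC_iff_dist {Z : Type*} [PseudoMetricSpace Z] {f : G → Z} :
    RightUC ‹_› f ↔ ∀ ε > 0, ∃ U ∈ 𝓝 (1 : G), ∀ g h, g * h⁻¹ ∈ U → dist (f g) (f h) < ε := by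
  refine ⟨fun hf ε hε => hf _ (dist_mem_uniformity hε), fun hf V hV => ?_⟩
  obtain ⟨ε, hε, hεV⟩ := mem_uniformity_dist.1 hV
  obtain ⟨U, hU, hUε⟩ := hf ε hε
  exact ⟨U, hU, fun g h hgh => hεV (hUε g h hgh)⟩

theorem RightUC.continuous [IsTopologicalGroup G] {Y : Type*} [UniformSpace Y] {f : G → Y}
    (hf : RightUC ‹_› f) : Continuous f := by
  refine continuous_iff_continuousAt.2 fun x => ?_
  rw [ContinuousAt, nhds_eq_comap_uniformity', tendsto_comap_iff]
  intro V hV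
  obtain ⟨U, hU, hUV⟩ := hf V hV
  rw [← nhds_translation_mul_inv x] at *
  exact mem_map.2 (mem_comap.2 ⟨U, hU, fun g hg => hUV g x hg⟩)

theorem RightUC.frequently_mem_of_mapClusterPt [IsTopologicalGroup G] {Y : Type*}
    [UniformSpace Y] {ψ : G → Y} (hψ : RightUC ‹_› ψ) {ι : Type*} {L : Filter ι} {a b : ι → G}
    {s : G} (hs : MapClusterPt s L fun n => b n * (a n)⁻¹) {V : SetRel Y Y} (hV : V ∈ 𝓤 Y) :
    ∃ᶠ n in L, (ψ (b n), ψ (s * a n)) ∈ V := by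
  obtain ⟨U, hU, hUV⟩ := hψ V hV
  have hUs : {g | g * s⁻¹ ∈ U} ∈ 𝓝 s := by
    rw [← nhds_translation_mul_inv s]
    exact preimage_mem_comap hU
  refine (mapClusterPt_iff_frequently.1 hs _ hUs).mono fun n hn => hUV _ _ ?_
  simpa [mul_assoc] using hn

theorem dist_mul_le_of_mem_closure [ContinuousMul G] {Z : Type*} [PseudoMetricSpace Z]
    {φ : G → Z} (hφ : Continuous φ) {W : Set G} {δ : ℝ}
    (hW : ∀ g h, g * h⁻¹ ∈ W → dist (φ g) (φ h) ≤ δ) {s : G} (hs : s ∈ closure W) (x : G) :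
    dist (φ (s * x)) (φ x) ≤ δ := by
  have hclosed : IsClosed {v | dist (φ (v * x)) (φ x) ≤ δ} :=
    isClosed_le (by fun_prop) continuous_const
  refine closure_minimal (fun v hv => ?_) hclosed hs
  simpa using hW (v * x) x (by simpa using hv)

end RightUC

theorem exists_seq_forall_lt_mem {X ι : Type*} {L : Filter X} {t : ι → X} {P : ι → Prop}
    (hP : ∀ U ∈ L, ∃ i, t i ∈ U ∧ P i) {N : ι → Set X} (hN : ∀ i, N i ∈ L) :
    ∃ c : ℕ → ι, (∀ n, P (c n)) ∧ ∀ j m, j < m → t (c m) ∈ N (c j) := by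
  refine exists_seq_of_forall_finset_exists P (fun i j => t j ∈ N i) fun s _ => ?_
  obtain ⟨i, hi, hPi⟩ := hP _ ((biInter_finset_mem s).2 fun i _ => hN i)
  exact ⟨i, hPi, fun j hj => mem_iInter₂.1 hi j hj⟩

section Separation

variable {Z : Type*} [PseudoMetricSpace Z]

theorem exists_infinite_near_or_separated (y : ℕ → Z) {M : Set ℕ} (hM : M.Infinite) (r : ℝ) :
    (∃ p, {m ∈ M | dist (y m) p < r}.Infinite) ∨
      ∃ M' ⊆ M, M'.Infinite ∧ M'.Pairwise fun i j => r ≤ dist (y i) (y j) := by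
  refine or_iff_not_imp_left.2 fun hnear => ?_
  simp only [not_exists, not_infinite] at hnear
  obtain ⟨c, hcM, hc⟩ := exists_seq_of_forall_finset_exists (· ∈ M)
    (fun i j => i ≠ j ∧ r ≤ dist (y i) (y j)) fun s _ => by
      have hfin := s.finite_toSet.union (s.finite_toSet.biUnion fun i _ => hnear (y i))
      obtain ⟨m, hmM, hm⟩ := (hM.sdiff hfin).nonempty
      simp only [mem_union, mem_iUnion, mem_ofPred_eq, not_or, not_exists, not_and, not_lt] at hm
      refine ⟨m, hmM, fun i hi => ⟨fun him => hm.1 (him ▸ hi), ?_⟩⟩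
      rw [dist_comm]
      exact hm.2 i hi hmM
  have hinj : Injective c := fun i j hij => by
    by_contra hne
    rcases Ne.lt_or_gt hne with h | h
    · exact (hc i j h).1 hij
    · exact (hc j i h).1 hij.symm
  refine ⟨range c, range_subset_iff.2 hcM, infinite_range_of_injective hinj, ?_⟩
  rintro _ ⟨i, rfl⟩ _ ⟨j, rfl⟩ hij
  rcases lt_trichotomy i j with h | rfl | h
  · exact (hc i j h).2
  · exact absurd rfl hij
  · rw [dist_comm]
    exact (hc j i h).2

theorem exists_infinite_forall_le_dist (x y : ℕ → Z) {ε δ : ℝ} (hε : 0 ≤ ε) (hδ : 0 ≤ δ)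
    (hxy : ∀ n, ε ≤ dist (y n) (x n))
    (hx : ∀ j m, j < m → dist (x m) (x j) ≤ dist (y m) (x j) + δ)
    (hy : ∀ j m, j < m → dist (y m) (y j) ≤ dist (x m) (y j) + δ) :
    ∃ M : Set ℕ, M.Infinite ∧ ∀ j ∈ M, ∀ m ∈ M, ε / 4 - δ ≤ dist (y m) (x j) := by
  rcases exists_infinite_near_or_separated x infinite_univ (ε / 4) with
    ⟨p, hp⟩ | ⟨M₁, -, hM₁, hsep₁⟩
  · refine ⟨_, hp, fun j hj m hm => ?_⟩
    have := dist_triangle4 (y m) (x j) p (x m)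
    linarith [hxy m, hj.2, hm.2, dist_comm p (x m)]
  rcases exists_infinite_near_or_separated y hM₁ (ε / 4) with
    ⟨q, hq⟩ | ⟨M, hMM₁, hM, hsep⟩
  · refine ⟨_, hq, fun j hj m hm => ?_⟩
    have := dist_triangle4 (y j) q (y m) (x j)
    linarith [hxy j, hj.2, hm.2, dist_comm q (y m)]
  refine ⟨M, hM, fun j hj m hm => ?_⟩
  rcases lt_trichotomy j m with hjm | rfl | hmj
  · linarith [hx j m hjm, hsep₁ (hMM₁ hm) (hMM₁ hj) hjm.ne']
  · linarith [hxy j]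
  · linarith [hy m j hmj, hsep hj hm hmj.ne', dist_comm (x j) (y m)]

end Separation

theorem le_of_forall_lipschitzWith_of_mapClusterPt {G : Type*} [Group G] [TopologicalSpace G]
    [IsTopologicalGroup G] {Z : Type*} [PseudoMetricSpace Z] {f : G → Z}
    (hf : ∀ φ : Z → ℝ, LipschitzWith 1 φ → RightUC ‹_› (φ ∘ f)) {ι : Type*} {L : Filter ι}
    {M : Set ι} (hML : M ∈ L) {a b : ι → G} {s : G}
    (hs : MapClusterPt s L fun n => b n * (a n)⁻¹) {ρ δ : ℝ}
    (hsa : ∀ m ∈ M, dist (f (s * a m)) (f (a m)) ≤ δ)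
    (hsep : ∀ j ∈ M, ∀ m ∈ M, ρ ≤ dist (f (b m)) (f (a j))) : ρ ≤ δ := by
  refine le_of_forall_pos_lt_add fun η hη => ?_
  set A := (f ∘ a) '' M
  obtain ⟨m, hclose, hmM⟩ := (((hf _ (lipschitz_infDist_pt A)).frequently_mem_of_mapClusterPt hs
    (dist_mem_uniformity hη)).and_eventually hML).exists
  have hfar : ρ ≤ infDist (f (b m)) A :=
    (le_infDist ⟨_, mem_image_of_mem _ hmM⟩).2 (by rintro _ ⟨j, hj, rfl⟩; exact hsep j hj m hmM)
  have hnear : infDist (f (s * a m)) A ≤ δ :=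
    (infDist_le_dist_of_mem (mem_image_of_mem _ hmM)).trans (hsa m hmM)
  replace hclose : dist (infDist (f (b m)) A) (infDist (f (s * a m)) A) < η := hclose
  rw [Real.dist_eq, abs_sub_lt_iff] at hclose
  linarith

theorem rightUC_of_forall_lipschitzWith {G : Type*} [Group G] [TopologicalSpace G]
    [IsTopologicalGroup G] [WeaklyLocallyCompactSpace G] {Z : Type*} [PseudoMetricSpace Z]
    {f : G → Z} (hf : ∀ φ : Z → ℝ, LipschitzWith 1 φ → RightUC ‹_› (φ ∘ f)) :
    RightUC ‹_› f := by
  rw [rightUC_iff_dist]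
  by_contra! hbad
  obtain ⟨ε, hε, hbad⟩ := hbad
  -- so that `ε / 4 - δ`, the separation obtained below, exceeds `δ`
  set δ := ε / 12 with hδ
  have hδ₀ : 0 < δ := by positivity
  have hosc : ∀ p : Z, ∃ W ∈ 𝓝 (1 : G), ∀ g h, g * h⁻¹ ∈ W →
      dist (dist (f g) p) (dist (f h) p) < δ :=
    fun p => rightUC_iff_dist.1 (hf _ (LipschitzWith.dist_left p)) δ hδ₀
  choose W hW hWosc using hosc
  have hWle : ∀ p g h, g * h⁻¹ ∈ W p → dist (f h) p ≤ dist (f g) p + δ ∧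
      dist (f g) p ≤ dist (f h) p + δ := fun p g h hgh => by
    have := abs_sub_lt_iff.1 (hWosc p g h hgh)
    constructor <;> linarith
  obtain ⟨K, hKc, hK⟩ := exists_compact_mem_nhds (1 : G)
  obtain ⟨c, hcP, hcW⟩ := exists_seq_forall_lt_mem (t := fun c : G × G => c.1 * c.2⁻¹)
    (P := fun c => ε ≤ dist (f c.1) (f c.2) ∧ c.1 * c.2⁻¹ ∈ K)
    (N := fun c => W (f c.2) ∩ W (f c.1))
    (fun U hU => by
      obtain ⟨g, h, hgh, hfar⟩ := hbad _ (inter_mem hU hK)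
      exact ⟨(g, h), hgh.1, hfar, hgh.2⟩)
    fun c => inter_mem (hW _) (hW _)
  set a := fun n => (c n).2
  set b := fun n => (c n).1
  obtain ⟨M, hMinf, hM⟩ := exists_infinite_forall_le_dist (f ∘ a) (f ∘ b) hε.le hδ₀.le
    (fun n => (hcP n).1) (fun j m hjm => (hWle _ _ _ (hcW j m hjm).1).1)
    (fun j m hjm => (hWle _ _ _ (hcW j m hjm).2).2)
  have : (atTop ⊓ 𝓟 M).NeBot :=
    frequently_mem_iff_neBot.1 (Nat.frequently_atTop_iff_infinite.2 hMinf)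
  obtain ⟨s, -, hs⟩ := hKc.exists_mapClusterPt (f := atTop ⊓ 𝓟 M)
    (u := fun n => b n * (a n)⁻¹) (tendsto_principal.2 (Eventually.of_forall fun n => (hcP n).2))
  have hsa : ∀ m, dist (f (s * a m)) (f (a m)) ≤ δ := fun m => by
    have hcl : s ∈ closure (W (f (a m))) := hs.clusterPt.mem_closure_of_mem _ <| mem_map.2 <|
      mem_inf_of_left (mem_atTop_sets.2 ⟨m + 1, fun n hn => (hcW m n hn).1⟩)
    simpa [Real.dist_eq] using dist_mul_le_of_mem_closure
      (hf _ (LipschitzWith.dist_left (f (a m)))).continuous (fun g h hgh => (hWosc _ g h hgh).le)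
      hcl (a m)
  linarith [le_of_forall_lipschitzWith_of_mapClusterPt hf
    (mem_inf_of_right (mem_principal_self M)) hs (fun m _ => hsa m) hM]

theorem exists_countablyGenerated_uniformSpace_ge {X : Type*} [u : UniformSpace X]
    {V : SetRel X X} (hV : V ∈ 𝓤 X) :
    ∃ u' : UniformSpace X, u ≤ u' ∧ (𝓤[u']).IsCountablyGenerated ∧ V ∈ 𝓤[u'] := by
  choose! half hhalf hsymm hcomp using fun s (hs : s ∈ 𝓤 X) => comp_symm_mem_uniformity_sets hs
  have hmem : ∀ n, half^[n] V ∈ 𝓤 X := fun n => by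
    induction n with
    | zero => exact hV
    | succ n ih => rw [iterate_succ_apply']; exact hhalf _ ih
  have hsub : ∀ s ∈ 𝓤 X, half s ⊆ s := fun s hs p hp =>
    hcomp s hs ⟨p.1, refl_mem_uniformity (hhalf s hs), hp⟩
  have hbasis : (⨅ n, 𝓟 (half^[n] V)).HasBasis (fun _ => True) (half^[·] V) :=
    hasBasis_iInf_principal (antitone_nat_of_succ_le fun n => by
      rw [iterate_succ_apply']; exact hsub _ (hmem n)).directed_ge
  have hstep : ∀ r ∈ ⨅ n, 𝓟 (half^[n] V), ∃ n, half (half^[n] V) ⊆ r := fun r hr => by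
    obtain ⟨n, -, hn⟩ := hbasis.mem_iff.1 hr
    exact ⟨n, (hsub _ (hmem n)).trans hn⟩
  refine ⟨.ofCore <| .mk' (⨅ n, 𝓟 (half^[n] V)) (fun r hr x => ?_) (fun r hr => ?_)
    (fun r hr => ?_), le_iInf fun n => le_principal_iff.2 (hmem n), isCountablyGenerated_seq _,
    hbasis.mem_of_mem (i := 0) trivial⟩
  · obtain ⟨n, hn⟩ := hstep r hr
    exact hn (refl_mem_uniformity (hhalf _ (hmem n)))
  · obtain ⟨n, hn⟩ := hstep r hr
    refine hbasis.mem_iff.2 ⟨n + 1, trivial, fun p hp => hn ?_⟩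
    rw [iterate_succ_apply'] at hp
    exact (hsymm _ (hmem n)).symm _ _ hp
  · obtain ⟨n, hn⟩ := hstep r hr
    refine ⟨half^[n + 2] V, hbasis.mem_of_mem trivial, ?_⟩
    rw [iterate_succ_apply', iterate_succ_apply']
    exact (hcomp _ (hhalf _ (hmem n))).trans hn

theorem exists_uniformContinuous_pseudoMetricSpace {X : Type u} [UniformSpace X]
    {V : SetRel X X} (hV : V ∈ 𝓤 X) :
    ∃ (Z : Type u) (_ : PseudoMetricSpace Z) (F : X → Z), UniformContinuous F ∧
      ∃ ε > 0, ∀ x y, dist (F x) (F y) < ε → (x, y) ∈ V := by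
  obtain ⟨u', hle, hcg, hVu'⟩ := exists_countablyGenerated_uniformSpace_ge hV
  obtain ⟨m, rfl⟩ := @UniformSpace.metrizable_uniformity X u' hcg
  obtain ⟨ε, hε, hεV⟩ := (@mem_uniformity_dist X m V).1 hVu'
  exact ⟨X, m, id, le_iff_uniformContinuous_id.1 hle, ε, hε, fun x y hxy => hεV hxy⟩

theorem exists_boundedSpace_dist_eq_min_one (Z : Type u) [PseudoMetricSpace Z] :
    ∃ (Z' : Type u) (_ : PseudoMetricSpace Z') (T : Z → Z'), BoundedSpace Z' ∧
      ∀ x y, dist (T x) (T y) = min (dist x y) 1 := by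
  let m : PseudoMetricSpace Z :=
    { dist := fun x y => min (dist x y) 1
      dist_self := fun x => by simp
      dist_comm := fun x y => by rw [dist_comm]
      dist_triangle := fun x y z => by
        have := dist_triangle x y z
        have := dist_nonneg (x := x) (y := y)
        have := dist_nonneg (x := y) (y := z)
        simp only [min_def]
        split_ifs <;> linarith }
  refine ⟨Z, m, id, (@Bornology.isBounded_univ Z m.toBornology).1 ?_, fun _ _ => rfl⟩
  exact (@Metric.isBounded_iff Z m _).2 ⟨1, fun _ _ _ _ => min_le_right _ _⟩

theorem exists_boundedSpace_uniformContinuous {X : Type u} [UniformSpace X]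
    {V : SetRel X X} (hV : V ∈ 𝓤 X) :
    ∃ (Z : Type u) (_ : PseudoMetricSpace Z), BoundedSpace Z ∧ ∃ F : X → Z,
      UniformContinuous F ∧ ∃ ε > 0, ∀ x y, dist (F x) (F y) < ε → (x, y) ∈ V := by
  obtain ⟨Z₀, _, F₀, hF₀, ε, hε, hεV⟩ := exists_uniformContinuous_pseudoMetricSpace hV
  obtain ⟨Z, _, T, hZ, hT⟩ := exists_boundedSpace_dist_eq_min_one Z₀
  have hTlip : LipschitzWith 1 T := .of_dist_le_mul fun x y => by simp [hT]
  refine ⟨Z, _, hZ, T ∘ F₀, hTlip.uniformContinuous.comp hF₀, min ε 1, by positivity,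
    fun x y hxy => hεV x y ?_⟩
  rw [comp_apply, comp_apply, hT] at hxy
  by_contra! h
  exact hxy.not_ge (min_le_min h le_rfl)

/-- Corollary 2.7: every locally compact topological group is proximally fine with respect
to its right uniformity. -/
theorem stmt_7 {G : Type u} [Group G] [TopologicalSpace G] [IsTopologicalGroup G]
    [LocallyCompactSpace G] :
    ProxFineGroup ‹TopologicalSpace G› := by
  intro Y _ f hf V hV
  obtain ⟨Z, _, _, F, hF, ε, hε, hFV⟩ := exists_boundedSpace_uniformContinuous hV
  have hFf : RightUC ‹_› (F ∘ f) := rightUC_of_forall_lipschitzWith fun φ hφ => by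
    obtain ⟨C, hC⟩ := isBounded_iff_forall_norm_le.1 (hφ.isBounded_image BoundedSpace.bounded_univ)
    refine hf (φ ∘ F) (hφ.uniformContinuous.comp hF) ⟨C, fun y => ?_⟩
    simpa using hC _ (mem_image_of_mem φ (mem_univ (F y)))
  obtain ⟨U, hU, hUε⟩ := hFf _ (dist_mem_uniformity hε)
  exact ⟨U, hU, fun g h hgh => hFV _ _ (hUε g h hgh)⟩
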